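/- Let F : D → ℂ be holomorphic on an open set D ⊆ ℂ and let γ be a closed rectifiable Jordan curve in D enclosing the point f(ζ) for ζ ∈ A₃ with f(ζ) ∈ D. Then the principal extension Φ(ζ) = (1/(2πi)) ∮_γ F(t)(t − ζ)⁻¹ dt is well defined (t − ζ is invertible in A₃ for all t on γ), and f(Φ(ζ)) = F(f(ζ)); i.e., the first Cartan component of the principal extension equals F(f(ζ)). -/

import Mathlib

open scoped Topology
open Filter

noncomputable section

/-- The three-dimensional commutative algebra `A₃ = ℂ[ρ]/(ρ³)`,
represented by coordinates in the Cartan basis `{1, ρ, ρ²}`. -/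
@[ext] structure A3 : Type where
  x0 : ℂ
  x1 : ℂ
  x2 : ℂ

namespace A3

instance : Zero A3 := ⟨⟨0,0,0⟩⟩
instance : One A3 := ⟨⟨1,0,0⟩⟩
instance : Add A3 := ⟨fun u v => ⟨u.x0+v.x0, u.x1+v.x1, u.x2+v.x2⟩⟩
instance : Neg A3 := ⟨fun u => ⟨-u.x0, -u.x1, -u.x2⟩⟩
instance : Mul A3 :=
  ⟨fun u v => ⟨u.x0*v.x0, u.x0*v.x1+u.x1*v.x0, u.x0*v.x2+u.x1*v.x1+u.x2*v.x0⟩⟩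
instance : SMul ℂ A3 := ⟨fun a u => ⟨a*u.x0, a*u.x1, a*u.x2⟩⟩

@[simp] lemma zero_x0 : (0:A3).x0 = 0 := rfl
@[simp] lemma zero_x1 : (0:A3).x1 = 0 := rfl
@[simp] lemma zero_x2 : (0:A3).x2 = 0 := rfl
@[simp] lemma one_x0 : (1:A3).x0 = 1 := rfl
@[simp] lemma one_x1 : (1:A3).x1 = 0 := rfl
@[simp] lemma one_x2 : (1:A3).x2 = 0 := rfl
@[simp] lemma add_x0 (u v : A3) : (u+v).x0 = u.x0+v.x0 := rfl
@[simp] lemma add_x1 (u v : A3) : (u+v).x1 = u.x1+v.x1 := rfl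
@[simp] lemma add_x2 (u v : A3) : (u+v).x2 = u.x2+v.x2 := rfl
@[simp] lemma neg_x0 (u : A3) : (-u).x0 = -u.x0 := rfl
@[simp] lemma neg_x1 (u : A3) : (-u).x1 = -u.x1 := rfl
@[simp] lemma neg_x2 (u : A3) : (-u).x2 = -u.x2 := rfl
@[simp] lemma mul_x0 (u v : A3) : (u*v).x0 = u.x0*v.x0 := rfl
@[simp] lemma mul_x1 (u v : A3) : (u*v).x1 = u.x0*v.x1+u.x1*v.x0 := rfl
@[simp] lemma mul_x2 (u v : A3) : (u*v).x2 = u.x0*v.x2+u.x1*v.x1+u.x2*v.x0 := rfl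
@[simp] lemma smul_x0 (a : ℂ) (u : A3) : (a•u).x0 = a*u.x0 := rfl
@[simp] lemma smul_x1 (a : ℂ) (u : A3) : (a•u).x1 = a*u.x1 := rfl
@[simp] lemma smul_x2 (a : ℂ) (u : A3) : (a•u).x2 = a*u.x2 := rfl

instance : AddCommGroup A3 where
  add_assoc u v w := by ext <;> simp <;> ring
  zero_add u := by ext <;> simp
  add_zero u := by ext <;> simp
  add_comm u v := by ext <;> simp <;> ring
  neg_add_cancel u := by ext <;> simp
  nsmul := nsmulRec
  zsmul := zsmulRec

instance : CommRing A3 where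
  __ := (inferInstance : AddCommGroup A3)
  left_distrib u v w := by ext <;> simp <;> ring
  right_distrib u v w := by ext <;> simp <;> ring
  zero_mul u := by ext <;> simp
  mul_zero u := by ext <;> simp
  mul_assoc u v w := by ext <;> simp <;> ring
  one_mul u := by ext <;> simp
  mul_one u := by ext <;> simp
  mul_comm u v := by ext <;> simp <;> ring

instance : Module ℂ A3 where
  one_smul u := by ext <;> simp
  mul_smul a b u := by ext <;> simp <;> ring
  smul_zero a := by ext <;> simp [zero_x0, zero_x1, zero_x2]
  smul_add a u v := by ext <;> simp <;> ring
  add_smul a b u := by ext <;> simp <;> ring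
  zero_smul u := by ext <;> simp [zero_x0, zero_x1, zero_x2]

instance : Algebra ℂ A3 where
  algebraMap :=
  { toFun a := ⟨a, 0, 0⟩
    map_one' := rfl
    map_mul' a b := by ext <;> simp
    map_zero' := rfl
    map_add' a b := by ext <;> simp }
  commutes' a u := by ext <;> simp <;> ring
  smul_def' a u := by ext <;> simp

@[simp] lemma algebraMap_x0 (a : ℂ) : (algebraMap ℂ A3 a).x0 = a := rfl
@[simp] lemma algebraMap_x1 (a : ℂ) : (algebraMap ℂ A3 a).x1 = 0 := rfl
@[simp] lemma algebraMap_x2 (a : ℂ) : (algebraMap ℂ A3 a).x2 = 0 := rfl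

/-- The nilpotent generator `ρ`. -/
def rho : A3 := ⟨0, 1, 0⟩

@[simp] lemma rho_x0 : rho.x0 = 0 := rfl
@[simp] lemma rho_x1 : rho.x1 = 1 := rfl
@[simp] lemma rho_x2 : rho.x2 = 0 := rfl

lemma rho_cube : rho ^ 3 = 0 := by ext <;> simp [pow_succ] <;> ring

/-- The projection `f(a + bρ + cρ²) = a`, as a `ℂ`-algebra homomorphism. -/
def pf : A3 →ₐ[ℂ] ℂ where
  toFun u := u.x0
  map_one' := rfl
  map_mul' u v := rfl
  map_zero' := rfl
  map_add' u v := rfl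
  commutes' a := rfl

@[simp] lemma pf_apply (u : A3) : pf u = u.x0 := rfl

/-- The embedding of `A3` into `EuclideanSpace ℂ (Fin 3)`, used to endow
`A3` with the Euclidean norm on the Cartan coordinates. -/
def toE : A3 →ₗ[ℂ] EuclideanSpace ℂ (Fin 3) where
  toFun u := (WithLp.equiv 2 (Fin 3 → ℂ)).symm ![u.x0, u.x1, u.x2]
  map_add' u v := by
    ext i
    fin_cases i <;> simp [WithLp.equiv]
  map_smul' a u := by
    ext i
    fin_cases i <;> simp [WithLp.equiv]

lemma toE_injective : Function.Injective toE := by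
  intro u v h
  have h0 : toE u 0 = toE v 0 := congrArg (fun x => x 0) h
  have h1 : toE u 1 = toE v 1 := congrArg (fun x => x 1) h
  have h2 : toE u 2 = toE v 2 := congrArg (fun x => x 2) h
  ext
  · exact h0
  · exact h1
  · exact h2

instance : NormedAddCommGroup A3 :=
  NormedAddCommGroup.induced A3 (EuclideanSpace ℂ (Fin 3)) toE.toAddMonoidHom
    toE_injective

instance : NormedSpace ℂ A3 := NormedSpace.induced ℂ A3 (EuclideanSpace ℂ (Fin 3)) toE

lemma norm_def (u : A3) :
    ‖u‖ = Real.sqrt (‖u.x0‖ ^ 2 + ‖u.x1‖ ^ 2 + ‖u.x2‖ ^ 2) := by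
  show ‖toE u‖ = _
  rw [EuclideanSpace.norm_eq]
  simp [toE, Fin.sum_univ_three]

/-- The set `I = {λ₁ρ + λ₂ρ² : λ₁, λ₂ ∈ ℂ}` (the radical of `A₃`). -/
def idealSet : Set A3 := {x | ∃ l1 l2 : ℂ, x = l1 • rho + l2 • rho ^ 2}

/-- The set of directions `{±1, ±i, ±ρ, ±iρ, ±ρ², ±iρ²}`. -/
def dirs : Set A3 :=
  {1, -1, Complex.I • (1:A3), -(Complex.I • (1:A3)),
   rho, -rho, Complex.I • rho, -(Complex.I • rho),
   rho ^ 2, -(rho ^ 2), Complex.I • rho ^ 2, -(Complex.I • rho ^ 2)}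

end A3

namespace A3

instance : FiniteDimensional ℂ A3 := FiniteDimensional.of_injective toE toE_injective

lemma abs_x0_le_norm (u : A3) : ‖u.x0‖ ≤ ‖u‖ := by
  rw [norm_def, Real.le_sqrt (norm_nonneg _)]
  nlinarith [sq_nonneg ‖u.x1‖, sq_nonneg ‖u.x2‖]
  positivity

/-- `pf` as a continuous linear map. -/
def pfL : A3 →L[ℂ] ℂ :=
  LinearMap.mkContinuous pf.toLinearMap 1 (fun u => by
    simpa using abs_x0_le_norm u)

@[simp] lemma pfL_apply (u : A3) : pfL u = u.x0 := rfl

end A3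

/-- for `F` holomorphic on `D` and a circle `γ` in `D` enclosing `f(ζ)`,
the principal extension `(1/(2πi)) ∮_γ F(t)(t − ζ)⁻¹ dt` is well defined
(`t − ζ` is invertible for `t` on `γ`) and its first Cartan component is `F(f(ζ))`. -/
theorem principal_extension_first_component (D : Set ℂ) (hD : IsOpen D) (F : ℂ → ℂ)
    (hF : DifferentiableOn ℂ F D) (z₀ : ℂ) (r : ℝ) (hr : 0 < r)
    (hball : Metric.closedBall z₀ r ⊆ D) (ζ : A3) (hζ : A3.pf ζ ∈ Metric.ball z₀ r) :
    (∀ t ∈ Metric.sphere z₀ r, IsUnit (algebraMap ℂ A3 t - ζ)) ∧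
    A3.pf ((2 * Real.pi * Complex.I : ℂ)⁻¹ •
        ∮ t in C(z₀, r), F t • Ring.inverse (algebraMap ℂ A3 t - ζ)) =
      F (A3.pf ζ) := by
  have hane : ∀ t ∈ Metric.sphere z₀ r, t - ζ.x0 ≠ 0 := by
    intro t ht h
    have hd : dist t z₀ = r := ht
    have hζ' : dist ζ.x0 z₀ < r := hζ
    rw [← sub_eq_zero.mp h] at hζ'
    rw [hd] at hζ'
    exact lt_irrefl r hζ'
  set g : ℂ → A3 := fun t =>
    (⟨(t - ζ.x0)⁻¹, ζ.x1 / (t - ζ.x0) ^ 2,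
      (ζ.x1 ^ 2 + (t - ζ.x0) * ζ.x2) / (t - ζ.x0) ^ 3⟩ : A3) with hg
  have hmul : ∀ t : ℂ, t - ζ.x0 ≠ 0 → (algebraMap ℂ A3 t - ζ) * g t = 1 := by
    intro t h
    ext <;> simp only [hg, sub_eq_add_neg, A3.mul_x0, A3.mul_x1, A3.mul_x2,
      A3.add_x0, A3.add_x1, A3.add_x2, A3.neg_x0, A3.neg_x1, A3.neg_x2,
      A3.algebraMap_x0, A3.algebraMap_x1, A3.algebraMap_x2,
      A3.one_x0, A3.one_x1, A3.one_x2] <;>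
      rw [← sub_eq_add_neg] <;> field_simp <;> ring
  have hunit : ∀ t ∈ Metric.sphere z₀ r, IsUnit (algebraMap ℂ A3 t - ζ) := by
    intro t ht
    exact ⟨⟨_, g t, hmul t (hane t ht), by rw [mul_comm]; exact hmul t (hane t ht)⟩, rfl⟩
  have hinv : ∀ t ∈ Metric.sphere z₀ r,
      Ring.inverse (algebraMap ℂ A3 t - ζ) = g t := by
    intro t ht
    exact Ring.inverse_unit
      ⟨_, g t, hmul t (hane t ht), by rw [mul_comm]; exact hmul t (hane t ht)⟩
  refine ⟨hunit, ?_⟩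
  have hne : ∀ θ : ℝ, circleMap z₀ r θ - ζ.x0 ≠ 0 := fun θ =>
    hane _ (circleMap_mem_sphere z₀ hr.le θ)
  have hcont_a : Continuous fun θ : ℝ => circleMap z₀ r θ - ζ.x0 :=
    (continuous_circleMap z₀ r).sub continuous_const
  have hcontF : Continuous fun θ : ℝ => F (circleMap z₀ r θ) :=
    hF.continuousOn.comp_continuous (continuous_circleMap z₀ r)
      (fun θ => hball (Metric.sphere_subset_closedBall (circleMap_mem_sphere z₀ hr.le θ)))
  have hcontg : Continuous fun θ : ℝ => g (circleMap z₀ r θ) := by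
    have h1 : (fun θ : ℝ => g (circleMap z₀ r θ)) = fun θ =>
        ((circleMap z₀ r θ - ζ.x0)⁻¹ • (1 : A3)
          + (ζ.x1 / (circleMap z₀ r θ - ζ.x0) ^ 2) • A3.rho)
          + ((ζ.x1 ^ 2 + (circleMap z₀ r θ - ζ.x0) * ζ.x2) /
              (circleMap z₀ r θ - ζ.x0) ^ 3) • A3.rho ^ 2 := by
      funext θ
      ext <;> simp [hg, A3.rho, pow_succ] <;> ring
    rw [h1]
    exact (((hcont_a.inv₀ hne).smul continuous_const).add
        ((continuous_const.div (hcont_a.pow 2) fun θ => pow_ne_zero 2 (hne θ)).smul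
          continuous_const)).add
      (((continuous_const.add (hcont_a.mul continuous_const)).div (hcont_a.pow 3)
          fun θ => pow_ne_zero 3 (hne θ)).smul continuous_const)
  have heqfun : (fun θ : ℝ => deriv (circleMap z₀ r) θ •
      (F (circleMap z₀ r θ) • Ring.inverse (algebraMap ℂ A3 (circleMap z₀ r θ) - ζ))) =
      fun θ => deriv (circleMap z₀ r) θ • (F (circleMap z₀ r θ) • g (circleMap z₀ r θ)) := by
    funext θ
    rw [hinv _ (circleMap_mem_sphere z₀ hr.le θ)]
  have hint : IntervalIntegrable
      (fun θ : ℝ => deriv (circleMap z₀ r) θ •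
        (F (circleMap z₀ r θ) • Ring.inverse (algebraMap ℂ A3 (circleMap z₀ r θ) - ζ)))
      MeasureTheory.volume 0 (2 * Real.pi) := by
    rw [heqfun]
    apply Continuous.intervalIntegrable
    have hderiv : Continuous fun θ : ℝ => deriv (circleMap z₀ r) θ := by
      simp only [deriv_circleMap]
      exact (continuous_circleMap 0 r).mul continuous_const
    exact hderiv.smul (hcontF.smul hcontg)
  have key : A3.pfL (∮ t in C(z₀, r), F t • Ring.inverse (algebraMap ℂ A3 t - ζ)) =
      ∮ t in C(z₀, r), (t - A3.pf ζ)⁻¹ • F t := by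
    rw [circleIntegral, circleIntegral, ← A3.pfL.intervalIntegral_comp_comm hint]
    congr 1
    funext θ
    rw [map_smul, map_smul, A3.pfL_apply, hinv _ (circleMap_mem_sphere z₀ hr.le θ)]
    simp only [hg, smul_eq_mul, A3.pf_apply]
    ring
  have hcauchy := (hF.mono hball).circleIntegral_sub_inv_smul hζ
  have h2pi : (2 * (Real.pi : ℂ) * Complex.I) ≠ 0 := Complex.two_pi_I_ne_zero
  show ((2 * (Real.pi : ℂ) * Complex.I)⁻¹ •
      (∮ t in C(z₀, r), F t • Ring.inverse (algebraMap ℂ A3 t - ζ))).x0 = F (A3.pf ζ)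
  rw [A3.smul_x0]
  have : (∮ t in C(z₀, r), F t • Ring.inverse (algebraMap ℂ A3 t - ζ)).x0 =
      (2 * (Real.pi : ℂ) * Complex.I) • F (A3.pf ζ) := by
    rw [← A3.pfL_apply, key, hcauchy]
  rw [this, smul_eq_mul]
  field_simp
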